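/- arXiv:1603.04605 — 2 statements merged into one kernel-verified Lean document; each statement's English description precedes it below -/
import Mathlib

section
/- (Theorem 3, Part 1: invariant feasible set) Consider the closed-loop system under the shift and optimizer decrease conditions, with B̂_x and B̂_u positive definite recentered relaxed barrier functions (relaxation parameter δ > 0) for the compact polytopes X = {x : C_x x ≤ d_x} and U = {u : C_u u ≤ d_u}, with P*_uc a symmetric positive semidefinite DARE solution for (A,B,Q,R), and assume the closed-loop state trajectory satisfies x(k) → 0. Define β̄_x(δ) := min over i and ξ of {B̂_x(ξ) : C_xⁱξ = d_xⁱ}, β̄_u(δ) := min over j and v of {B̂_u(v) : C_uʲv = d_uʲ}, β̄(δ) := min{β̄_x(δ), β̄_u(δ)}, and Ẑ_N(δ) := {(U,x) ∈ ℝ^{Nm}×ℝⁿ : Ĵ_N(U,x) − xᵀP*_uc x ≤ ε·β̄(δ)}. Then for every initialization (U₀,x₀) ∈ Ẑ_N(δ) and every sequence i_T(k) ∈ ℕ, the closed-loop trajectories satisfy x(k) ∈ X and u(k) = Π₀U(k) ∈ U for all k ∈ ℕ. -/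
open Matrix

/-- Predicted states: `x₀(U,x) = x`, `x_{k+1}(U,x) = A x_k(U,x) + B u_k`. -/
noncomputable def predState {n m N : ℕ} (A : Matrix (Fin n) (Fin n) ℝ)
    (B : Matrix (Fin n) (Fin m) ℝ) (u : Fin N → Fin m → ℝ) (x : Fin n → ℝ) :
    ℕ → Fin n → ℝ
  | 0 => x
  | k + 1 => A.mulVec (predState A B u x k) +
      (if h : k < N then B.mulVec (u ⟨k, h⟩) else 0)

/-- The relaxed stage cost `ℓ̂(x,u) = xᵀQx + uᵀRu + ε B̂_x(x) + ε B̂_u(u)`. -/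
noncomputable def stageCost {n m : ℕ} (Q : Matrix (Fin n) (Fin n) ℝ)
    (R : Matrix (Fin m) (Fin m) ℝ) (ε : ℝ)
    (Bx : (Fin n → ℝ) → ℝ) (Bu : (Fin m → ℝ) → ℝ)
    (x : Fin n → ℝ) (u : Fin m → ℝ) : ℝ :=
  x ⬝ᵥ Q.mulVec x + u ⬝ᵥ R.mulVec u + ε * Bx x + ε * Bu u

/-- The relaxed barrier function based MPC cost. -/
noncomputable def mpcCost {n m N : ℕ} (A : Matrix (Fin n) (Fin n) ℝ)
    (B : Matrix (Fin n) (Fin m) ℝ) (Q : Matrix (Fin n) (Fin n) ℝ)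
    (R : Matrix (Fin m) (Fin m) ℝ) (P : Matrix (Fin n) (Fin n) ℝ) (ε : ℝ)
    (Bx : (Fin n → ℝ) → ℝ) (Bu : (Fin m → ℝ) → ℝ)
    (u : Fin N → Fin m → ℝ) (x : Fin n → ℝ) : ℝ :=
  (∑ k : Fin N, stageCost Q R ε Bx Bu (predState A B u x k) (u k)) +
    (predState A B u x N) ⬝ᵥ P.mulVec (predState A B u x N)

/-- The shift operator `Ψ_s(U,x) = (u₁,…,u_{N−1}, k_f(U,x))`. -/
def shiftOp {n m N : ℕ} (kf : (Fin N → Fin m → ℝ) → (Fin n → ℝ) → Fin m → ℝ)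
    (u : Fin N → Fin m → ℝ) (x : Fin n → ℝ) : Fin N → Fin m → ℝ :=
  fun i => if h : (i : ℕ) + 1 < N then u ⟨(i : ℕ) + 1, h⟩ else kf u x

/-- The iterated optimization operator. -/
def PhiIter {n m N : ℕ} [NeZero N] (A : Matrix (Fin n) (Fin n) ℝ)
    (B : Matrix (Fin n) (Fin m) ℝ)
    (kf : (Fin N → Fin m → ℝ) → (Fin n → ℝ) → Fin m → ℝ)
    (Ψo : (Fin N → Fin m → ℝ) → (Fin n → ℝ) → Fin N → Fin m → ℝ) :
    ℕ → (Fin N → Fin m → ℝ) → (Fin n → ℝ) → Fin N → Fin m → ℝ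
  | 0, u, x => shiftOp kf u x
  | i + 1, u, x => Ψo (PhiIter A B kf Ψo i u x) (A.mulVec x + B.mulVec (u 0))

/-- The closed-loop system `x(k+1) = Ax(k) + BΠ₀U(k)`, `U(k+1) = Φ^{i_T(k)}(U(k),x(k))`. -/
def cloop {n m N : ℕ} [NeZero N] (A : Matrix (Fin n) (Fin n) ℝ)
    (B : Matrix (Fin n) (Fin m) ℝ)
    (kf : (Fin N → Fin m → ℝ) → (Fin n → ℝ) → Fin m → ℝ)
    (Ψo : (Fin N → Fin m → ℝ) → (Fin n → ℝ) → Fin N → Fin m → ℝ)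
    (iT : ℕ → ℕ) (U0 : Fin N → Fin m → ℝ) (x0 : Fin n → ℝ) :
    ℕ → (Fin N → Fin m → ℝ) × (Fin n → ℝ)
  | 0 => (U0, x0)
  | k + 1 =>
    (PhiIter A B kf Ψo (iT k) (cloop A B kf Ψo iT U0 x0 k).1 (cloop A B kf Ψo iT U0 x0 k).2,
      A.mulVec (cloop A B kf Ψo iT U0 x0 k).2 + B.mulVec ((cloop A B kf Ψo iT U0 x0 k).1 0))


/-!
Along the closed loop, `W(k) = Ĵ_N(U(k), x(k)) − x(k)ᵀ P*_uc x(k)` decreases by at least the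
barrier part `ε (B̂_x(x(k)) + B̂_u(u(k)))` of the stage cost: optimizer steps do not increase
`Ĵ_N`, the shift lowers it by the whole stage cost, and the Bellman inequality of the DARE bounds
the growth of `xᵀ P*_uc x` by the quadratic part of the stage cost. As `Ĵ_N ≥ 0` and `x(k) → 0`,
`W` stays above a sequence tending to `0`, so `ε (B̂_x(x(k)) + B̂_u(u(k))) ≤ W(0) ≤ ε β̄`.
Finally, let a convex barrier vanishing only at the origin be at most `β̄` at `x`. If `x` violated
the `i`-th constraint, the point of `[0, x]` on the hyperplane `Cⁱ ξ = dⁱ` would have barrier value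
at least `β̄` but, by convexity, strictly less than at `x`.
-/

open Filter Topology

theorem nonneg_of_pos_of_ne_zero {E : Type*} [Zero E] {f : E → ℝ} (hf0 : f 0 = 0)
    (hpos : ∀ x, x ≠ 0 → 0 < f x) (x : E) : 0 ≤ f x := by
  obtain rfl | hx := eq_or_ne x 0
  · exact hf0.ge
  · exact (hpos x hx).le

namespace Matrix

theorem mulVec_dotProduct_mulVec_mulVec {R ι κ μ : Type*} [CommSemiring R] [Fintype ι]
    [Fintype κ] [Fintype μ] (M : Matrix ι κ R) (N : Matrix ι ι R) (M' : Matrix ι μ R)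
    (v : κ → R) (w : μ → R) :
    (M *ᵥ v) ⬝ᵥ N *ᵥ (M' *ᵥ w) = v ⬝ᵥ (Mᵀ * N * M') *ᵥ w := by
  rw [← mulVec_mulVec, ← mulVec_mulVec, dotProduct_transpose_mulVec, dotProduct_comm]

/-- Completion of the square. -/
theorem PosDef.neg_dotProduct_inv_mulVec_le {κ : Type*} [Fintype κ] [DecidableEq κ]
    {S : Matrix κ κ ℝ} (hS : S.PosDef) (b u : κ → ℝ) :
    -(b ⬝ᵥ S⁻¹ *ᵥ b) ≤ u ⬝ᵥ S *ᵥ u + 2 * (b ⬝ᵥ u) := by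
  set v := S⁻¹ *ᵥ b
  have hSv : S *ᵥ v = b := by
    rw [mulVec_mulVec, mul_nonsing_inv _ ((isUnit_iff_isUnit_det S).1 hS.isUnit), one_mulVec]
  have hST : Sᵀ = S := by simpa using hS.1.eq
  have hvSu : v ⬝ᵥ S *ᵥ u = b ⬝ᵥ u := by
    rw [dotProduct_mulVec, ← mulVec_transpose, hST, hSv]
  have hsq := hS.posSemidef.dotProduct_mulVec_nonneg (u + v)
  simp only [star_trivial, mulVec_add, dotProduct_add, add_dotProduct, hSv, hvSu] at hsq
  rw [dotProduct_comm u b, dotProduct_comm v b] at hsq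
  linarith

/-- The Bellman inequality of the discrete algebraic Riccati equation. -/
theorem dotProduct_mulVec_le_of_dare {ι κ : Type*} [Fintype ι] [Fintype κ] [DecidableEq κ]
    {A Q P : Matrix ι ι ℝ} {B : Matrix ι κ ℝ} {R : Matrix κ κ ℝ} (hR : R.PosDef)
    (hP : P.PosSemidef)
    (hDARE : P = Aᵀ * P * A - Aᵀ * P * B * (R + Bᵀ * P * B)⁻¹ * Bᵀ * P * A + Q)
    (x : ι → ℝ) (u : κ → ℝ) :
    x ⬝ᵥ P *ᵥ x ≤
      x ⬝ᵥ Q *ᵥ x + u ⬝ᵥ R *ᵥ u + (A *ᵥ x + B *ᵥ u) ⬝ᵥ P *ᵥ (A *ᵥ x + B *ᵥ u) := by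
  set S := R + Bᵀ * P * B
  have hS : S.PosDef := hR.add_posSemidef <| by
    simpa [conjTranspose_eq_transpose_of_trivial] using hP.conjTranspose_mul_mul_same B
  set b := (Bᵀ * P * A) *ᵥ x with hb
  have hPT : Pᵀ = P := by simpa using hP.1.eq
  have hBA : (B *ᵥ u) ⬝ᵥ P *ᵥ (A *ᵥ x) = b ⬝ᵥ u := by
    rw [mulVec_dotProduct_mulVec_mulVec, dotProduct_comm]
  have hAB : (A *ᵥ x) ⬝ᵥ P *ᵥ (B *ᵥ u) = b ⬝ᵥ u := by
    rw [← dotProduct_transpose_mulVec, hPT, hBA]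
  have hgain : x ⬝ᵥ (Aᵀ * P * B * S⁻¹ * Bᵀ * P * A) *ᵥ x = b ⬝ᵥ S⁻¹ *ᵥ b := by
    have hT : (Bᵀ * P * A)ᵀ = Aᵀ * P * B := by
      simp only [transpose_mul, transpose_transpose, hPT, Matrix.mul_assoc]
    rw [hb, mulVec_dotProduct_mulVec_mulVec, hT]
    simp only [Matrix.mul_assoc]
  have hsq := hS.neg_dotProduct_inv_mulVec_le b u
  conv_lhs => rw [hDARE]
  simp only [add_mulVec, sub_mulVec, dotProduct_add, dotProduct_sub, mulVec_add, add_dotProduct,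
    hAB, hBA, hgain, mulVec_dotProduct_mulVec_mulVec, S] at hsq ⊢
  linarith

end Matrix

theorem ConvexOn.map_smul_le_of_map_zero {E : Type*} [AddCommGroup E] [Module ℝ E]
    {f : E → ℝ} (hf : ConvexOn ℝ Set.univ f) (hf0 : f 0 = 0) (x : E) {c : ℝ} (hc0 : 0 ≤ c)
    (hc1 : c ≤ 1) : f (c • x) ≤ c * f x := by
  simpa [hf0] using hf.2 (Set.mem_univ x) (Set.mem_univ 0) hc0 (sub_nonneg.2 hc1) (by ring)

theorem mulVec_le_of_le_sInf_hyperplanes {ι κ : Type*} [Fintype ι] {C : Matrix κ ι ℝ}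
    {d : κ → ℝ} {f : (ι → ℝ) → ℝ} (hf : ConvexOn ℝ Set.univ f) (hf0 : f 0 = 0)
    (hpos : ∀ x, x ≠ 0 → 0 < f x) (hd : ∀ i, 0 < d i) {x : ι → ℝ}
    (hx : f x ≤ sInf {t : ℝ | ∃ (i : κ) (ξ : ι → ℝ), (C *ᵥ ξ) i = d i ∧ t = f ξ}) :
    C *ᵥ x ≤ d := by
  intro i
  by_contra! hi
  have hCx : 0 < (C *ᵥ x) i := (hd i).trans hi
  have hx0 : x ≠ 0 := by
    rintro rfl
    simp only [mulVec_zero, Pi.zero_apply] at hCx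
    exact hCx.false
  set c := d i / (C *ᵥ x) i
  have hc0 : 0 < c := div_pos (hd i) hCx
  have hc1 : c < 1 := (div_lt_one hCx).2 hi
  have hface : (C *ᵥ (c • x)) i = d i := by
    rw [mulVec_smul, Pi.smul_apply, smul_eq_mul, div_mul_cancel₀ _ hCx.ne']
  have hbdd : BddBelow {t : ℝ | ∃ (i : κ) (ξ : ι → ℝ), (C *ᵥ ξ) i = d i ∧ t = f ξ} := by
    refine ⟨0, ?_⟩
    rintro _ ⟨-, ξ, -, rfl⟩
    exact nonneg_of_pos_of_ne_zero hf0 hpos ξ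
  have hmin := csInf_le hbdd ⟨i, c • x, hface, rfl⟩
  have hscale := hf.map_smul_le_of_map_zero hf0 x hc0.le hc1.le
  nlinarith [hpos x hx0]

theorem le_initial_of_succ_add_le {W c q : ℕ → ℝ} (hstep : ∀ k, W (k + 1) + c k ≤ W k)
    (hc : ∀ k, 0 ≤ c k) (hW : ∀ k, -q k ≤ W k) (hq : Tendsto q atTop (𝓝 0)) (k : ℕ) :
    c k ≤ W 0 := by
  have hanti : Antitone W := antitone_nat_of_succ_le fun k => by linarith [hstep k, hc k]
  refine ge_of_tendsto (by simpa using tendsto_const_nhds.add hq) ?_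
  filter_upwards [eventually_ge_atTop (k + 1)] with K hK
  linarith [hstep k, hanti hK, hanti (Nat.zero_le k), hW K]

/-- `Ĵ_N(U,x) − xᵀ P*_uc x`; the set `Ẑ_N(δ)` is its sublevel set at level `ε β̄(δ)`. -/
noncomputable def mpcCostGap {n m N : ℕ} (A : Matrix (Fin n) (Fin n) ℝ)
    (B : Matrix (Fin n) (Fin m) ℝ) (Q : Matrix (Fin n) (Fin n) ℝ) (R : Matrix (Fin m) (Fin m) ℝ)
    (P : Matrix (Fin n) (Fin n) ℝ)
    (ε : ℝ) (Bx : (Fin n → ℝ) → ℝ) (Bu : (Fin m → ℝ) → ℝ) (Puc : Matrix (Fin n) (Fin n) ℝ)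
    (u : Fin N → Fin m → ℝ) (x : Fin n → ℝ) : ℝ :=
  mpcCost A B Q R P ε Bx Bu u x - x ⬝ᵥ Puc *ᵥ x

section ClosedLoop

variable {n m N : ℕ} {A : Matrix (Fin n) (Fin n) ℝ} {B : Matrix (Fin n) (Fin m) ℝ}
  {Q : Matrix (Fin n) (Fin n) ℝ} {R : Matrix (Fin m) (Fin m) ℝ} {P : Matrix (Fin n) (Fin n) ℝ}
  {ε : ℝ} {Bx : (Fin n → ℝ) → ℝ} {Bu : (Fin m → ℝ) → ℝ}

theorem stageCost_nonneg (hε : 0 ≤ ε) (hQ : ∀ x, 0 ≤ x ⬝ᵥ Q *ᵥ x)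
    (hR : ∀ u, 0 ≤ u ⬝ᵥ R *ᵥ u) (hBx : ∀ x, 0 ≤ Bx x) (hBu : ∀ u, 0 ≤ Bu u)
    (x : Fin n → ℝ) (u : Fin m → ℝ) : 0 ≤ stageCost Q R ε Bx Bu x u := by
  unfold stageCost
  have := mul_nonneg hε (hBx x)
  have := mul_nonneg hε (hBu u)
  linarith [hQ x, hR u]

theorem mpcCost_nonneg (hℓ : ∀ x u, 0 ≤ stageCost Q R ε Bx Bu x u)
    (hP : ∀ x, 0 ≤ x ⬝ᵥ P *ᵥ x) (u : Fin N → Fin m → ℝ) (x : Fin n → ℝ) :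
    0 ≤ mpcCost A B Q R P ε Bx Bu u x :=
  add_nonneg (Finset.sum_nonneg fun _ _ => hℓ _ _) (hP _)

variable [NeZero N] {kf : (Fin N → Fin m → ℝ) → (Fin n → ℝ) → Fin m → ℝ}
  {Ψo : (Fin N → Fin m → ℝ) → (Fin n → ℝ) → Fin N → Fin m → ℝ}
  {J : (Fin N → Fin m → ℝ) → (Fin n → ℝ) → ℝ}

theorem PhiIter_add_le {ℓ : (Fin n → ℝ) → (Fin m → ℝ) → ℝ}
    (hshift : ∀ u x, J (shiftOp kf u x) (A *ᵥ x + B *ᵥ u 0) + ℓ x (u 0) ≤ J u x)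
    (hopt : ∀ u x, J (Ψo u x) x ≤ J u x) (i : ℕ) (u : Fin N → Fin m → ℝ) (x : Fin n → ℝ) :
    J (PhiIter A B kf Ψo i u x) (A *ᵥ x + B *ᵥ u 0) + ℓ x (u 0) ≤ J u x := by
  induction i with
  | zero => exact hshift u x
  | succ i ih => exact (add_le_add_left (hopt _ _) _).trans ih

theorem mpcCostGap_PhiIter_add_le (hR : R.PosDef) {Puc : Matrix (Fin n) (Fin n) ℝ}
    (hPuc : Puc.PosSemidef)
    (hDARE : Puc = Aᵀ * Puc * A - Aᵀ * Puc * B * (R + Bᵀ * Puc * B)⁻¹ * Bᵀ * Puc * A + Q)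
    (hshift : ∀ u x, mpcCost A B Q R P ε Bx Bu (shiftOp kf u x) (A *ᵥ x + B *ᵥ u 0) +
      stageCost Q R ε Bx Bu x (u 0) ≤ mpcCost A B Q R P ε Bx Bu u x)
    (hopt : ∀ u x, mpcCost A B Q R P ε Bx Bu (Ψo u x) x ≤ mpcCost A B Q R P ε Bx Bu u x)
    (i : ℕ) (u : Fin N → Fin m → ℝ) (x : Fin n → ℝ) :
    mpcCostGap A B Q R P ε Bx Bu Puc (PhiIter A B kf Ψo i u x) (A *ᵥ x + B *ᵥ u 0) +
        (ε * Bx x + ε * Bu (u 0)) ≤ mpcCostGap A B Q R P ε Bx Bu Puc u x := by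
  have hcost := PhiIter_add_le hshift hopt i u x
  have hdare := dotProduct_mulVec_le_of_dare hR hPuc hDARE x (u 0)
  unfold stageCost at hcost
  unfold mpcCostGap
  linarith

end ClosedLoop

theorem invariant_feasible_set_general
    {n m N qx qu : ℕ} [NeZero N]
    (A : Matrix (Fin n) (Fin n) ℝ) (B : Matrix (Fin n) (Fin m) ℝ)
    (Q : Matrix (Fin n) (Fin n) ℝ) (R : Matrix (Fin m) (Fin m) ℝ)
    (P Puc : Matrix (Fin n) (Fin n) ℝ) (ε : ℝ) (hε : 0 < ε)
    (Cx : Matrix (Fin qx) (Fin n) ℝ) (dx : Fin qx → ℝ)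
    (Cu : Matrix (Fin qu) (Fin m) ℝ) (du : Fin qu → ℝ)
    (Bx : (Fin n → ℝ) → ℝ) (Bu : (Fin m → ℝ) → ℝ)
    (kf : (Fin N → Fin m → ℝ) → (Fin n → ℝ) → Fin m → ℝ)
    (Ψo : (Fin N → Fin m → ℝ) → (Fin n → ℝ) → Fin N → Fin m → ℝ)
    (γ : (Fin N → Fin m → ℝ) → (Fin n → ℝ) → ℝ)
    (iT : ℕ → ℕ) (U0 : Fin N → Fin m → ℝ) (x0 : Fin n → ℝ)
    (hQpsd : ∀ x : Fin n → ℝ, 0 ≤ x ⬝ᵥ Q.mulVec x)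
    (hRsymm : R.IsSymm) (hRpd : ∀ u : Fin m → ℝ, u ≠ 0 → 0 < u ⬝ᵥ R.mulVec u)
    (hPpd : ∀ x : Fin n → ℝ, x ≠ 0 → 0 < x ⬝ᵥ P.mulVec x)
    (hdx : ∀ i, 0 < dx i) (hdu : ∀ j, 0 < du j)
    (hBx0 : Bx 0 = 0)
    (hBxpos : ∀ x : Fin n → ℝ, x ≠ 0 → 0 < Bx x)
    (hBxconv : ConvexOn ℝ Set.univ Bx)
    (hBu0 : Bu 0 = 0)
    (hBupos : ∀ u : Fin m → ℝ, u ≠ 0 → 0 < Bu u)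
    (hBuconv : ConvexOn ℝ Set.univ Bu)
    (hshift : ∀ (u : Fin N → Fin m → ℝ) (x : Fin n → ℝ),
      mpcCost A B Q R P ε Bx Bu (shiftOp kf u x) (A.mulVec x + B.mulVec (u 0)) -
          mpcCost A B Q R P ε Bx Bu u x ≤ -(stageCost Q R ε Bx Bu x (u 0)))
    (hopt : ∀ (u : Fin N → Fin m → ℝ) (x : Fin n → ℝ),
      mpcCost A B Q R P ε Bx Bu (Ψo u x) x - mpcCost A B Q R P ε Bx Bu u x ≤ -(γ u x))
    (hγnonneg : ∀ (u : Fin N → Fin m → ℝ) (x : Fin n → ℝ), 0 ≤ γ u x)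
    (hPucsymm : Puc.IsSymm) (hPucpsd : ∀ x : Fin n → ℝ, 0 ≤ x ⬝ᵥ Puc.mulVec x)
    (hDARE : Puc = Aᵀ * Puc * A -
      Aᵀ * Puc * B * (R + Bᵀ * Puc * B)⁻¹ * Bᵀ * Puc * A + Q)
    (hxconv : Filter.Tendsto (fun k => (cloop A B kf Ψo iT U0 x0 k).2)
      Filter.atTop (nhds 0)) :
    ∀ βx βu βbar : ℝ,
      βx = sInf {t : ℝ | ∃ (i : Fin qx) (ξ : Fin n → ℝ),
        Cx.mulVec ξ i = dx i ∧ t = Bx ξ} →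
      βu = sInf {t : ℝ | ∃ (j : Fin qu) (v : Fin m → ℝ),
        Cu.mulVec v j = du j ∧ t = Bu v} →
      βbar = min βx βu →
      mpcCost A B Q R P ε Bx Bu U0 x0 - x0 ⬝ᵥ Puc.mulVec x0 ≤ ε * βbar →
      ∀ k : ℕ,
        Cx.mulVec (cloop A B kf Ψo iT U0 x0 k).2 ≤ dx ∧
        Cu.mulVec ((cloop A B kf Ψo iT U0 x0 k).1 0) ≤ du := by
  intro βx βu βbar hβx hβu hβbar hinit k
  have hRpos : R.PosDef :=
    .of_dotProduct_mulVec_pos (isHermitian_iff_isSymm.2 hRsymm) (by simpa using hRpd)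
  have hPucpos : Puc.PosSemidef :=
    .of_dotProduct_mulVec_nonneg (isHermitian_iff_isSymm.2 hPucsymm) (by simpa using hPucpsd)
  have hBxnn := nonneg_of_pos_of_ne_zero hBx0 hBxpos
  have hBunn := nonneg_of_pos_of_ne_zero hBu0 hBupos
  have hJ := mpcCost_nonneg (A := A) (B := B) (N := N) (stageCost_nonneg hε.le hQpsd
    (nonneg_of_pos_of_ne_zero (zero_dotProduct _) hRpd) hBxnn hBunn)
    (nonneg_of_pos_of_ne_zero (zero_dotProduct _) hPpd)
  set z := cloop A B kf Ψo iT U0 x0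
  have hq : Tendsto (fun k => (z k).2 ⬝ᵥ Puc *ᵥ (z k).2) atTop (𝓝 0) := by
    simpa [Function.comp_def] using ((continuous_id.dotProduct
      (continuous_const.matrix_mulVec continuous_id)).tendsto 0).comp hxconv
  have hbound := (le_initial_of_succ_add_le
    (W := fun k => mpcCostGap A B Q R P ε Bx Bu Puc (z k).1 (z k).2)
    (fun k => mpcCostGap_PhiIter_add_le hRpos hPucpos hDARE (fun u x => by linarith [hshift u x])
      (fun u x => by linarith [hopt u x, hγnonneg u x]) (iT k) (z k).1 (z k).2)
    (fun k => add_nonneg (mul_nonneg hε.le (hBxnn _)) (mul_nonneg hε.le (hBunn _)))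
    (fun k => by simp only [mpcCostGap]; linarith [hJ (z k).1 (z k).2]) hq k).trans hinit
  subst hβbar
  refine ⟨mulVec_le_of_le_sInf_hyperplanes hBxconv hBx0 hBxpos hdx ?_,
    mulVec_le_of_le_sInf_hyperplanes hBuconv hBu0 hBupos hdu ?_⟩
  · nlinarith [hBunn ((z k).1 0), min_le_left βx βu]
  · nlinarith [hBxnn (z k).2, min_le_right βx βu]

/-- (Theorem 3, Part 1) If the initialization `(U₀,x₀)` lies in the sublevel set
`Ẑ_N(δ) = {(U,x) : Ĵ_N(U,x) − xᵀP*_uc x ≤ ε β̄(δ)}`, where `β̄(δ)` is the smallest value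
attained by the relaxed barrier functions on the boundaries of the constraint sets, then
the closed-loop trajectories satisfy the state and input constraints for all times. -/
theorem invariant_feasible_set
    {n m N qx qu : ℕ} [NeZero N]
    (A : Matrix (Fin n) (Fin n) ℝ) (B : Matrix (Fin n) (Fin m) ℝ)
    (Q : Matrix (Fin n) (Fin n) ℝ) (R : Matrix (Fin m) (Fin m) ℝ)
    (P Puc : Matrix (Fin n) (Fin n) ℝ) (ε : ℝ) (hε : 0 < ε)
    (Cx : Matrix (Fin qx) (Fin n) ℝ) (dx : Fin qx → ℝ)
    (Cu : Matrix (Fin qu) (Fin m) ℝ) (du : Fin qu → ℝ)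
    (Bx : (Fin n → ℝ) → ℝ) (Bu : (Fin m → ℝ) → ℝ)
    (kf : (Fin N → Fin m → ℝ) → (Fin n → ℝ) → Fin m → ℝ)
    (Ψo : (Fin N → Fin m → ℝ) → (Fin n → ℝ) → Fin N → Fin m → ℝ)
    (γ : (Fin N → Fin m → ℝ) → (Fin n → ℝ) → ℝ)
    (iT : ℕ → ℕ) (U0 : Fin N → Fin m → ℝ) (x0 : Fin n → ℝ)
    (hQsymm : Q.IsSymm) (hQpsd : ∀ x : Fin n → ℝ, 0 ≤ x ⬝ᵥ Q.mulVec x)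
    (hRsymm : R.IsSymm) (hRpd : ∀ u : Fin m → ℝ, u ≠ 0 → 0 < u ⬝ᵥ R.mulVec u)
    (hPsymm : P.IsSymm) (hPpd : ∀ x : Fin n → ℝ, x ≠ 0 → 0 < x ⬝ᵥ P.mulVec x)
    (hdx : ∀ i, 0 < dx i) (hdu : ∀ j, 0 < du j)
    (hXcompact : IsCompact {x : Fin n → ℝ | Cx.mulVec x ≤ dx})
    (hUcompact : IsCompact {u : Fin m → ℝ | Cu.mulVec u ≤ du})
    (hBxcont : Continuous Bx) (hBx0 : Bx 0 = 0)
    (hBxpos : ∀ x : Fin n → ℝ, x ≠ 0 → 0 < Bx x)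
    (hBxconv : ConvexOn ℝ Set.univ Bx)
    (hBxru : Filter.Tendsto Bx (Filter.cocompact _) Filter.atTop)
    (hBucont : Continuous Bu) (hBu0 : Bu 0 = 0)
    (hBupos : ∀ u : Fin m → ℝ, u ≠ 0 → 0 < Bu u)
    (hBuconv : ConvexOn ℝ Set.univ Bu)
    (hBuru : Filter.Tendsto Bu (Filter.cocompact _) Filter.atTop)
    (hshift : ∀ (u : Fin N → Fin m → ℝ) (x : Fin n → ℝ),
      mpcCost A B Q R P ε Bx Bu (shiftOp kf u x) (A.mulVec x + B.mulVec (u 0)) -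
          mpcCost A B Q R P ε Bx Bu u x ≤ -(stageCost Q R ε Bx Bu x (u 0)))
    (hopt : ∀ (u : Fin N → Fin m → ℝ) (x : Fin n → ℝ),
      mpcCost A B Q R P ε Bx Bu (Ψo u x) x - mpcCost A B Q R P ε Bx Bu u x ≤ -(γ u x))
    (hγnonneg : ∀ (u : Fin N → Fin m → ℝ) (x : Fin n → ℝ), 0 ≤ γ u x)
    (hPucsymm : Puc.IsSymm) (hPucpsd : ∀ x : Fin n → ℝ, 0 ≤ x ⬝ᵥ Puc.mulVec x)
    (hDARE : Puc = Aᵀ * Puc * A -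
      Aᵀ * Puc * B * (R + Bᵀ * Puc * B)⁻¹ * Bᵀ * Puc * A + Q)
    (hxconv : Filter.Tendsto (fun k => (cloop A B kf Ψo iT U0 x0 k).2)
      Filter.atTop (nhds 0)) :
    ∀ βx βu βbar : ℝ,
      βx = sInf {t : ℝ | ∃ (i : Fin qx) (ξ : Fin n → ℝ),
        Cx.mulVec ξ i = dx i ∧ t = Bx ξ} →
      βu = sInf {t : ℝ | ∃ (j : Fin qu) (v : Fin m → ℝ),
        Cu.mulVec v j = du j ∧ t = Bu v} →
      βbar = min βx βu →
      mpcCost A B Q R P ε Bx Bu U0 x0 - x0 ⬝ᵥ Puc.mulVec x0 ≤ ε * βbar →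
      ∀ k : ℕ,
        Cx.mulVec (cloop A B kf Ψo iT U0 x0 k).2 ≤ dx ∧
        Cu.mulVec ((cloop A B kf Ψo iT U0 x0 k).1 0) ≤ du :=
  invariant_feasible_set_general A B Q R P Puc ε hε Cx dx Cu du Bx Bu kf Ψo γ iT U0 x0 hQpsd hRsymm
    hRpd hPpd hdx hdu hBx0 hBxpos hBxconv hBu0 hBupos hBuconv hshift hopt hγnonneg hPucsymm hPucpsd
    hDARE hxconv
end

section
/- (Lemma A.1) Let P = {ξ ∈ ℝ^r : Cξ ≤ d} be a compact polytope with all dⁱ > 0, and let B̂_P be the recentered relaxed barrier function with relaxation parameter δ, with 0 < δ ≤ min_i dⁱ and nonnegative weights w satisfying the recentering condition Cᵀ·diag(1/d¹,…,1/d^q)·(𝟙+w) = 0 (so that B̂_P is convex and positive definite). Define β̄(δ) := min over i ∈ {1,…,q} and ξ of {B̂_P(ξ) : Cⁱξ = dⁱ}. Then: (a) β̄ is a continuous function of δ, and (b) the sublevel set S_B̂ = {ξ ∈ ℝ^r : B̂_P(ξ) ≤ β̄(δ)} is contained in P. -/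
/-!
With `σ_D(z) = B̂(z) + ln D - 1 + z / D`, the gap between `B̂` and the tangent of `-ln` at `D`,
the recentering condition makes the tangent terms cancel:
`B̂_P(ξ) = ∑ (1 + wⁱ) σ_{dⁱ}(dⁱ - Cⁱξ)`. Each `σ_D` is convex and nonnegative for `δ ≤ D`, and
`σ_D(0) > 0`, so `B̂_P` is convex, vanishes at `0` and is positive on every hyperplane `Cⁱξ = dⁱ`.

(b) If `Cⁱξ > dⁱ`, put `t = dⁱ / Cⁱξ < 1`; then `tξ` lies on a hyperplane and
`B̂_P(tξ) ≤ t B̂_P(ξ) ≤ t β̄(δ) ≤ t B̂_P(tξ)`, contradicting `B̂_P(tξ) > 0`.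

(a) `σ_D(z) ≤ M` forces `-z ≤ M D` whatever `δ ≤ D`, so `B̂_P(ξ) ≤ M` forces `Cξ ≤ (M + 1) d`,
i.e. `ξ ∈ (M + 1) • P`. Fixing a hyperplane point `ξ₀` and `M > B̂_P(ξ₀)` at `δ₀`, for `δ` near
`δ₀` the infimum defining `β̄(δ)` is therefore taken over the fixed compact set of hyperplane
points in `(M + 1) • P`, and an infimum of a jointly continuous function over a fixed compact set
is continuous.
-/

open Matrix

/-- The relaxed logarithmic barrier function with relaxation parameter `δ`. -/
noncomputable def Bhat (δ z : ℝ) : ℝ :=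
  if δ < z then -Real.log z
  else (1 / 2) * (((z - 2 * δ) / δ) ^ 2 - 1) - Real.log δ

/-- The recentered relaxed logarithmic barrier function for the polytope `{ξ : Cξ ≤ d}`. -/
noncomputable def BhatP {q r : ℕ} (δ : ℝ) (C : Matrix (Fin q) (Fin r) ℝ)
    (d w : Fin q → ℝ) (ξ : Fin r → ℝ) : ℝ :=
  ∑ i, (1 + w i) * (Bhat δ (-(C.mulVec ξ i) + d i) + Real.log (d i))

open Real Set Filter Topology

section RelaxedBarrier

variable {δ D z : ℝ}

theorem Bhat_of_lt (h : δ < z) : Bhat δ z = -log z := if_pos h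

-- For `z ≤ δ`, `B̂` is the second-order Taylor polynomial of `-log` at `δ`.
theorem Bhat_of_le (hδ : δ ≠ 0) (h : z ≤ δ) :
    Bhat δ z = (z / δ - 1) ^ 2 / 2 - (z / δ - 1) - log δ := by
  rw [Bhat, if_neg h.not_gt]
  field_simp
  ring

theorem Bhat_eq_neg_log (hδ : 0 < δ) (h : δ ≤ z) : Bhat δ z = -log z := by
  rcases h.lt_or_eq with h | rfl
  · exact Bhat_of_lt h
  · rw [Bhat_of_le hδ.ne' le_rfl, div_self hδ.ne']
    ring

theorem hasDerivAt_Bhat (hδ : 0 < δ) (z : ℝ) :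
    HasDerivAt (Bhat δ) (if δ < z then -z⁻¹ else (z / δ - 2) / δ) z := by
  have hquad : ∀ x, HasDerivAt (fun z => (z / δ - 1) ^ 2 / 2 - (z / δ - 1) - log δ)
      ((x / δ - 2) / δ) x := fun x => by
    have h : HasDerivAt (fun z => z / δ - 1) (1 / δ) x :=
      ((hasDerivAt_id' x).div_const δ).sub_const 1
    refine (((h.fun_pow 2).div_const 2).sub h |>.sub_const (log δ)).congr_deriv ?_
    push_cast
    field_simp
    ring
  have hlog : ∀ x, 0 < x → HasDerivAt (fun z => -log z) (-x⁻¹) x := fun x hx =>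
    (hasDerivAt_log hx.ne').neg
  rcases lt_trichotomy z δ with h | rfl | h
  · rw [if_neg h.not_gt]
    refine (hquad z).congr_of_eventuallyEq ?_
    filter_upwards [Iic_mem_nhds h] with x hx using Bhat_of_le hδ.ne' hx
  · rw [if_neg (lt_irrefl z), show (z / z - 2) / z = -z⁻¹ by field_simp; ring]
    have hleft : HasDerivWithinAt (Bhat z) (-z⁻¹) (Iic z) z := by
      refine ((hquad z).hasDerivWithinAt.congr (fun x hx => Bhat_of_le hδ.ne' hx)
        (Bhat_of_le hδ.ne' le_rfl)).congr_deriv ?_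
      field_simp
      ring
    have hright : HasDerivWithinAt (Bhat z) (-z⁻¹) (Ici z) z :=
      (hlog z hδ).hasDerivWithinAt.congr (fun x hx => Bhat_eq_neg_log hδ hx)
        (Bhat_eq_neg_log hδ le_rfl)
    simpa only [Iic_union_Ici, hasDerivWithinAt_univ] using hleft.union hright
  · rw [if_pos h]
    refine (hlog z (hδ.trans h)).congr_of_eventuallyEq ?_
    filter_upwards [Ioi_mem_nhds h] with x hx using Bhat_of_lt hx

theorem convexOn_Bhat (hδ : 0 < δ) : ConvexOn ℝ univ (Bhat δ) := by
  refine Monotone.convexOn_univ_of_deriv (fun z => (hasDerivAt_Bhat hδ z).differentiableAt) ?_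
  rw [show deriv (Bhat δ) = _ from funext fun z => (hasDerivAt_Bhat hδ z).deriv]
  intro a b hab
  dsimp only
  split_ifs with ha hb hb
  · exact neg_le_neg (inv_anti₀ (hδ.trans ha) hab)
  · exact absurd (ha.trans_le hab) hb
  · have hinv : -δ⁻¹ ≤ -b⁻¹ := neg_le_neg (inv_anti₀ hδ hb.le)
    have hquad : (a / δ - 2) / δ ≤ -δ⁻¹ := by
      rw [div_le_iff₀ hδ, neg_mul, inv_mul_cancel₀ hδ.ne']
      linarith [(div_le_one hδ).2 (not_lt.1 ha)]
    linarith
  · gcongr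

theorem continuousOn_Bhat : ContinuousOn (fun p : ℝ × ℝ => Bhat p.1 p.2) (Ioi 0 ×ˢ univ) := by
  refine ContinuousOn.if ?_ ?_ ?_
  · rintro p ⟨⟨hp, -⟩, hfr⟩
    have h : p.1 = p.2 := frontier_lt_subset_eq continuous_fst continuous_snd hfr
    rw [← h, ← Bhat_eq_neg_log hp le_rfl, Bhat, if_neg (lt_irrefl _)]
  · refine ContinuousOn.neg (continuousOn_log.comp continuousOn_snd ?_)
    rintro p ⟨⟨hp, -⟩, hcl⟩
    exact (lt_of_lt_of_le hp (closure_lt_subset_le continuous_fst continuous_snd hcl)).ne'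
  · refine ContinuousOn.sub ?_ (continuousOn_log.comp continuousOn_fst fun p hp => ?_)
    · refine (ContinuousOn.div ?_ continuousOn_fst fun p hp => ?_).pow 2 |>.sub
        continuousOn_const |>.const_smul (1 / 2 : ℝ)
      · fun_prop
      · exact (mem_Ioi.1 hp.1.1).ne'
    · exact (mem_Ioi.1 hp.1.1).ne'

end RelaxedBarrier

/-- The gap between `B̂` and the tangent line of `-log` at `D`. -/
noncomputable def barrierExcess (δ D z : ℝ) : ℝ := Bhat δ z + log D - 1 + z / D

section BarrierExcess

variable {δ D z : ℝ}

theorem barrierExcess_nonneg (hδ : 0 < δ) (hδD : δ ≤ D) : 0 ≤ barrierExcess δ D z := by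
  have hD := hδ.trans_le hδD
  rw [barrierExcess]
  rcases lt_or_ge δ z with h | h
  · have := log_le_sub_one_of_pos (div_pos (hδ.trans h) hD)
    rw [log_div (hδ.trans h).ne' hD.ne'] at this
    rw [Bhat_of_lt h]
    linarith
  · have hlog := log_le_sub_one_of_pos (div_pos hδ hD)
    rw [log_div hδ.ne' hD.ne'] at hlog
    have hu : z / δ - 1 ≤ 0 := by rw [sub_nonpos, div_le_one hδ]; exact h
    have hδD' : δ / D ≤ 1 := (div_le_one hD).2 hδD
    have hz : z / D = (z / δ - 1) * (δ / D) + δ / D := by field_simp; ring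
    rw [Bhat_of_le hδ.ne' h, hz]
    nlinarith [sq_nonneg (z / δ - 1)]

theorem barrierExcess_zero_pos (hδ : 0 < δ) (hδD : δ ≤ D) : 0 < barrierExcess δ D 0 := by
  have := log_le_log hδ hδD
  rw [barrierExcess, Bhat_of_le hδ.ne' hδ.le]
  norm_num
  linarith

theorem neg_le_mul_of_barrierExcess_le {M : ℝ} (hδ : 0 < δ) (hδD : δ ≤ D)
    (h : barrierExcess δ D z ≤ M) : -z ≤ M * D := by
  have hD := hδ.trans_le hδD
  have hM : 0 ≤ M := (barrierExcess_nonneg hδ hδD).trans h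
  rcases le_or_gt 0 z with hz | hz
  · nlinarith
  · set u := z / δ - 1 with hu
    have hlog := log_le_log hδ hδD
    have hzD : z / δ ≤ z / D := by
      rw [div_le_div_iff₀ hδ hD]; nlinarith
    rw [barrierExcess, Bhat_of_le hδ.ne' (hz.trans hδ).le, ← hu] at h
    have hsq : u ^ 2 ≤ 2 * M := by nlinarith
    have hu' : -u ≤ M + 1 := abs_le_of_sq_le_sq' (by nlinarith) (by linarith) |>.1 |> neg_le.1
    have hz' : z = (u + 1) * δ := by rw [hu]; field_simp; ring
    nlinarith

end BarrierExcess

section RecenteredBarrier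

variable {q r : ℕ} {δ : ℝ} {C : Matrix (Fin q) (Fin r) ℝ} {d w : Fin q → ℝ}

theorem sum_mul_mulVec_div_eq_zero (hrec : Cᵀ *ᵥ (fun i => (1 / d i) * (1 + w i)) = 0)
    (ξ : Fin r → ℝ) : ∑ i, (1 + w i) * ((C *ᵥ ξ) i / d i) = 0 := by
  have h := congrArg (dotProduct ξ) hrec
  rw [dotProduct_mulVec, vecMul_transpose, dotProduct_zero] at h
  rw [← h, dotProduct]
  refine Finset.sum_congr rfl fun i _ => ?_
  ring

theorem BhatP_eq_sum_barrierExcess (hd : ∀ i, 0 < d i)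
    (hrec : Cᵀ *ᵥ (fun i => (1 / d i) * (1 + w i)) = 0) (ξ : Fin r → ℝ) :
    BhatP δ C d w ξ = ∑ i, (1 + w i) * barrierExcess δ (d i) (-(C *ᵥ ξ) i + d i) := by
  rw [← sub_eq_zero, BhatP, ← Finset.sum_sub_distrib, ← sum_mul_mulVec_div_eq_zero hrec ξ]
  refine Finset.sum_congr rfl fun i _ => ?_
  have := (hd i).ne'
  rw [barrierExcess]
  field_simp
  ring

theorem barrierExcess_le_BhatP (hd : ∀ i, 0 < d i) (hw : ∀ i, 0 ≤ w i) (hδ : 0 < δ)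
    (hδd : ∀ i, δ ≤ d i) (hrec : Cᵀ *ᵥ (fun i => (1 / d i) * (1 + w i)) = 0)
    (ξ : Fin r → ℝ) (i : Fin q) :
    barrierExcess δ (d i) (-(C *ᵥ ξ) i + d i) ≤ BhatP δ C d w ξ := by
  have hterm : ∀ j, 0 ≤ (1 + w j) * barrierExcess δ (d j) (-(C *ᵥ ξ) j + d j) := fun j =>
    mul_nonneg (by linarith [hw j]) (barrierExcess_nonneg hδ (hδd j))
  rw [BhatP_eq_sum_barrierExcess hd hrec]
  refine le_trans ?_ (Finset.single_le_sum (fun j _ => hterm j) (Finset.mem_univ i))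
  exact le_mul_of_one_le_left (barrierExcess_nonneg hδ (hδd i)) (by linarith [hw i])

theorem BhatP_nonneg (hd : ∀ i, 0 < d i) (hw : ∀ i, 0 ≤ w i) (hδ : 0 < δ)
    (hδd : ∀ i, δ ≤ d i) (hrec : Cᵀ *ᵥ (fun i => (1 / d i) * (1 + w i)) = 0)
    (ξ : Fin r → ℝ) : 0 ≤ BhatP δ C d w ξ := by
  rw [BhatP_eq_sum_barrierExcess hd hrec]
  exact Finset.sum_nonneg fun i _ =>
    mul_nonneg (by linarith [hw i]) (barrierExcess_nonneg hδ (hδd i))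

theorem BhatP_zero (hδ : 0 < δ) (hδd : ∀ i, δ ≤ d i) : BhatP δ C d w 0 = 0 := by
  refine Finset.sum_eq_zero fun i _ => ?_
  rw [mulVec_zero, Pi.zero_apply, neg_zero, zero_add, Bhat_eq_neg_log hδ (hδd i),
    neg_add_cancel, mul_zero]

theorem convexOn_BhatP (hw : ∀ i, 0 ≤ w i) (hδ : 0 < δ) :
    ConvexOn ℝ univ (BhatP δ C d w) := by
  refine ⟨convex_univ, fun x _ y _ a b ha hb hab => ?_⟩
  simp only [BhatP, smul_eq_mul, Finset.mul_sum, ← Finset.sum_add_distrib]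
  refine Finset.sum_le_sum fun i _ => ?_
  have harg : -(C *ᵥ (a • x + b • y)) i + d i
      = a * (-(C *ᵥ x) i + d i) + b * (-(C *ᵥ y) i + d i) := by
    rw [mulVec_add, mulVec_smul, mulVec_smul]
    simp only [Pi.add_apply, Pi.smul_apply, smul_eq_mul]
    linear_combination (-d i) * hab
  have hconv := (convexOn_Bhat hδ).2 (mem_univ (-(C *ᵥ x) i + d i))
    (mem_univ (-(C *ᵥ y) i + d i)) ha hb hab
  simp only [smul_eq_mul] at hconv
  have hw' : 0 ≤ 1 + w i := by linarith [hw i]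
  rw [harg]
  linear_combination mul_le_mul_of_nonneg_left hconv hw' - (1 + w i) * log (d i) * hab

theorem continuousOn_BhatP :
    ContinuousOn (fun p : ℝ × (Fin r → ℝ) => BhatP p.1 C d w p.2) (Ioi 0 ×ˢ univ) := by
  refine continuousOn_finsetSum _ fun i _ => ContinuousOn.mul continuousOn_const
    (ContinuousOn.add ?_ continuousOn_const)
  have hmap : Continuous fun p : ℝ × (Fin r → ℝ) => (p.1, -(C *ᵥ p.2) i + d i) := by
    fun_prop
  exact continuousOn_Bhat.comp hmap.continuousOn fun p hp => ⟨hp.1, mem_univ _⟩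

end RecenteredBarrier

def constraintHyperplanes {q r : ℕ} (C : Matrix (Fin q) (Fin r) ℝ) (d : Fin q → ℝ) :
    Set (Fin r → ℝ) :=
  {ξ | ∃ i, (C *ᵥ ξ) i = d i}

section Boundary

variable {q r : ℕ} {δ : ℝ} {C : Matrix (Fin q) (Fin r) ℝ} {d w : Fin q → ℝ}

theorem isClosed_constraintHyperplanes : IsClosed (constraintHyperplanes C d) := by
  have : constraintHyperplanes C d = ⋃ i, {ξ | (C *ᵥ ξ) i = d i} := by
    ext; simp [constraintHyperplanes]
  rw [this]
  exact isClosed_iUnion_of_finite fun i => isClosed_eq (by fun_prop) continuous_const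

theorem BhatP_pos_of_mem_constraintHyperplanes (hd : ∀ i, 0 < d i) (hw : ∀ i, 0 ≤ w i)
    (hδ : 0 < δ) (hδd : ∀ i, δ ≤ d i) (hrec : Cᵀ *ᵥ (fun i => (1 / d i) * (1 + w i)) = 0)
    {ξ : Fin r → ℝ} (hξ : ξ ∈ constraintHyperplanes C d) : 0 < BhatP δ C d w ξ := by
  obtain ⟨i, hi⟩ := hξ
  have h := barrierExcess_le_BhatP hd hw hδ hδd hrec ξ i
  rw [hi, neg_add_cancel] at h
  exact (barrierExcess_zero_pos hδ (hδd i)).trans_le h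

theorem mulVec_le_of_forall_BhatP_le (hd : ∀ i, 0 < d i) (hw : ∀ i, 0 ≤ w i) (hδ : 0 < δ)
    (hδd : ∀ i, δ ≤ d i) (hrec : Cᵀ *ᵥ (fun i => (1 / d i) * (1 + w i)) = 0)
    {ξ : Fin r → ℝ} (h : ∀ ζ ∈ constraintHyperplanes C d, BhatP δ C d w ξ ≤ BhatP δ C d w ζ) :
    C *ᵥ ξ ≤ d := by
  intro i
  by_contra! hi
  set t := d i / (C *ᵥ ξ) i
  have hCξ : 0 < (C *ᵥ ξ) i := (hd i).trans hi
  have ht0 : 0 < t := div_pos (hd i) hCξ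
  have ht1 : t < 1 := (div_lt_one hCξ).2 hi
  have hmem : t • ξ ∈ constraintHyperplanes C d :=
    ⟨i, by rw [mulVec_smul, Pi.smul_apply, smul_eq_mul, div_mul_cancel₀ _ hCξ.ne']⟩
  have hconv : BhatP δ C d w (t • ξ) ≤ t * BhatP δ C d w ξ := by
    have := (convexOn_BhatP (C := C) (d := d) hw hδ).2 (mem_univ ξ) (mem_univ 0) ht0.le
      (sub_nonneg.2 ht1.le) (add_sub_cancel t 1)
    simpa [BhatP_zero hδ hδd] using this
  have hpos := BhatP_pos_of_mem_constraintHyperplanes hd hw hδ hδd hrec hmem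
  nlinarith [h _ hmem]

theorem mulVec_le_smul_of_BhatP_le {M : ℝ} (hd : ∀ i, 0 < d i) (hw : ∀ i, 0 ≤ w i)
    (hδ : 0 < δ) (hδd : ∀ i, δ ≤ d i) (hrec : Cᵀ *ᵥ (fun i => (1 / d i) * (1 + w i)) = 0)
    {ξ : Fin r → ℝ} (h : BhatP δ C d w ξ ≤ M) : C *ᵥ ξ ≤ (M + 1) • d := by
  intro i
  have := neg_le_mul_of_barrierExcess_le hδ (hδd i)
    ((barrierExcess_le_BhatP hd hw hδ hδd hrec ξ i).trans h)
  rw [Pi.smul_apply, smul_eq_mul]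
  linarith

theorem isCompact_mulVec_le_smul (hcompact : IsCompact {ξ : Fin r → ℝ | C *ᵥ ξ ≤ d})
    {c : ℝ} (hc : 0 < c) : IsCompact {ξ : Fin r → ℝ | C *ᵥ ξ ≤ c • d} := by
  convert hcompact.smul c using 1
  ext ξ
  rw [mem_smul_set_iff_inv_smul_mem₀ hc.ne', mem_ofPred_eq, mem_ofPred_eq, mulVec_smul,
    inv_smul_le_iff_of_pos hc]

end Boundary

theorem sInf_image_eq_of_sublevel_subset {α : Type*} {f : α → ℝ} {S T : Set α} {x₀ : α}
    (hTS : T ⊆ S) (hx₀ : x₀ ∈ T) (hsub : ∀ x ∈ S, f x ≤ f x₀ → x ∈ T)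
    (hbdd : BddBelow (f '' S)) : sInf (f '' S) = sInf (f '' T) := by
  have hbddT : BddBelow (f '' T) := hbdd.mono (image_mono hTS)
  refine le_antisymm (csInf_le_csInf hbdd ⟨_, mem_image_of_mem f hx₀⟩ (image_mono hTS)) ?_
  refine le_csInf ⟨_, mem_image_of_mem f (hTS hx₀)⟩ ?_
  rintro _ ⟨x, hx, rfl⟩
  rcases le_total (f x) (f x₀) with h | h
  · exact csInf_le hbddT (mem_image_of_mem f (hsub x hx h))
  · exact (csInf_le hbddT (mem_image_of_mem f hx₀)).trans h

theorem ContinuousOn.sInf_image_of_isCompact {α β : Type*} [TopologicalSpace α]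
    [TopologicalSpace β] {f : α → β → ℝ} {s : Set α} {K : Set β} (hK : IsCompact K)
    (hf : ContinuousOn (fun p : α × β => f p.1 p.2) (s ×ˢ univ)) :
    ContinuousOn (fun x => sInf (f x '' K)) s := by
  rw [continuousOn_iff_continuous_domRestrict]
  have hsub : Continuous fun p : s × β => ((p.1 : α), p.2) := by fun_prop
  exact hK.continuous_sInf (f := fun (x : s) => f x)
    (hf.comp_continuous hsub fun p => ⟨p.1.2, mem_univ _⟩)

section Continuity

variable {q r : ℕ} {C : Matrix (Fin q) (Fin r) ℝ} {d w : Fin q → ℝ}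

theorem continuousOn_sInf_BhatP_image (hd : ∀ i, 0 < d i) (hw : ∀ i, 0 ≤ w i)
    (hcompact : IsCompact {ξ : Fin r → ℝ | C *ᵥ ξ ≤ d})
    (hrec : Cᵀ *ᵥ (fun i => (1 / d i) * (1 + w i)) = 0) :
    ContinuousOn (fun δ => sInf (BhatP δ C d w '' constraintHyperplanes C d))
      {δ | 0 < δ ∧ ∀ i, δ ≤ d i} := by
  rintro δ₀ ⟨hδ₀, hδ₀d⟩
  obtain hempty | ⟨ξ₀, hξ₀⟩ := (constraintHyperplanes C d).eq_empty_or_nonempty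
  · simp only [hempty, image_empty]
    exact continuousWithinAt_const
  set M := BhatP δ₀ C d w ξ₀ + 1
  set T := constraintHyperplanes C d ∩ {ξ | C *ᵥ ξ ≤ (M + 1) • d}
  have hM : 0 < M + 1 := by linarith [BhatP_nonneg hd hw hδ₀ hδ₀d hrec ξ₀]
  have hT : IsCompact T :=
    (isCompact_mulVec_le_smul hcompact hM).inter_left isClosed_constraintHyperplanes
  have hcont : ContinuousAt (fun δ => sInf (BhatP δ C d w '' T)) δ₀ :=
    (ContinuousOn.sInf_image_of_isCompact hT continuousOn_BhatP).continuousAt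
      (Ioi_mem_nhds hδ₀)
  have hξ₀cont : ContinuousAt (fun δ => BhatP δ C d w ξ₀) δ₀ :=
    (continuousOn_BhatP.comp (by fun_prop : Continuous fun δ : ℝ => (δ, ξ₀)).continuousOn
      fun δ hδ => ⟨hδ, mem_univ _⟩).continuousAt (Ioi_mem_nhds hδ₀)
  have heq : ∀ δ, 0 < δ → (∀ i, δ ≤ d i) → BhatP δ C d w ξ₀ ≤ M →
      sInf (BhatP δ C d w '' constraintHyperplanes C d) = sInf (BhatP δ C d w '' T) :=
    fun δ hδ hδd hδM => sInf_image_eq_of_sublevel_subset inter_subset_left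
      ⟨hξ₀, mulVec_le_smul_of_BhatP_le hd hw hδ hδd hrec hδM⟩
      (fun ξ hξ hle => ⟨hξ, mulVec_le_smul_of_BhatP_le hd hw hδ hδd hrec (hle.trans hδM)⟩)
      ⟨0, forall_mem_image.2 fun ξ _ => BhatP_nonneg hd hw hδ hδd hrec ξ⟩
  refine hcont.continuousWithinAt.congr_of_eventuallyEq ?_ (heq δ₀ hδ₀ hδ₀d (lt_add_one _).le)
  filter_upwards [self_mem_nhdsWithin,
    nhdsWithin_le_nhds (hξ₀cont.eventually_lt_const (lt_add_one _))]
    with δ ⟨hδ, hδd⟩ hδM using heq δ hδ hδd hδM.le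

end Continuity

/-- (Lemma A.1) For a compact polytope `P = {ξ : Cξ ≤ d}` and the recentered relaxed
barrier `B̂_P` with relaxation parameter `δ`, the boundary minimum
`β̄(δ) = min_{i,ξ} {B̂_P(ξ) : Cⁱξ = dⁱ}` is a continuous function of `δ` (on the set of
admissible relaxation parameters `0 < δ ≤ min_i dⁱ`), and the sublevel set
`{ξ : B̂_P(ξ) ≤ β̄(δ)}` is contained in `P`. -/
theorem barrier_boundary_value_continuous_and_sublevel_feasible
    {q r : ℕ} (C : Matrix (Fin q) (Fin r) ℝ) (d w : Fin q → ℝ)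
    (hd : ∀ i, 0 < d i) (hw : ∀ i, 0 ≤ w i)
    (hcompact : IsCompact {ξ : Fin r → ℝ | C.mulVec ξ ≤ d})
    (hrecenter : Cᵀ.mulVec (fun i => (1 / d i) * (1 + w i)) = 0) :
    ∀ betaBar : ℝ → ℝ,
      (∀ δ : ℝ, betaBar δ = sInf {t : ℝ | ∃ (i : Fin q) (ξ : Fin r → ℝ),
        C.mulVec ξ i = d i ∧ t = BhatP δ C d w ξ}) →
      ContinuousOn betaBar {δ : ℝ | 0 < δ ∧ ∀ i, δ ≤ d i} ∧
      (∀ δ : ℝ, 0 < δ → (∀ i, δ ≤ d i) →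
        ∀ ξ : Fin r → ℝ, BhatP δ C d w ξ ≤ betaBar δ → C.mulVec ξ ≤ d) := by
  intro betaBar hbb
  have hβ : betaBar = fun δ => sInf (BhatP δ C d w '' constraintHyperplanes C d) := by
    funext δ
    rw [hbb δ]
    congr 1
    ext t
    constructor
    · rintro ⟨i, ξ, hi, rfl⟩
      exact ⟨ξ, ⟨i, hi⟩, rfl⟩
    · rintro ⟨ξ, ⟨i, hi⟩, rfl⟩
      exact ⟨i, ξ, hi, rfl⟩
  subst hβ
  refine ⟨continuousOn_sInf_BhatP_image hd hw hcompact hrecenter, fun δ hδ hδd ξ hξ => ?_⟩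
  refine mulVec_le_of_forall_BhatP_le hd hw hδ hδd hrecenter fun ζ hζ => hξ.trans ?_
  exact csInf_le ⟨0, forall_mem_image.2 fun ξ _ => BhatP_nonneg hd hw hδ hδd hrecenter ξ⟩
    (mem_image_of_mem _ hζ)
end
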